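/- Concatenated contractions of a symmetric order-3 tensor transform by left multiplication under rotation: let T be an order-3 tensor on ℝ³, and let V₁, V₂, V₃ be the vectors obtained by contracting T over axes (2,3), (1,3), (1,2) respectively. Form the 3×3 matrix M(T) = [V₁ V₂ V₃]. Then for any orthogonal R, if T is symmetric (invariant under all permutations of its indices), M(R·T) = R · M(T). -/
import Mathlib


open Matrix

/-- Matrix of the three partial contractions of an order-3 tensor on `ℝ³`:
column 0, 1, 2 is the contraction of `T` over axes (2,3), (1,3), (1,2)
respectively. -/
def contractionMatrix (T : Fin 3 → Fin 3 → Fin 3 → ℝ) :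
    Matrix (Fin 3) (Fin 3) ℝ :=
  Matrix.of fun i j =>
    ![(fun k => ∑ a, T k a a), (fun k => ∑ a, T a k a), (fun k => ∑ a, T a a k)] j i

/-- For a symmetric order-3 tensor on `ℝ³`, the matrix of concatenated
contractions transforms by left multiplication under rotation:
`M(R·T) = R · M(T)`. -/
theorem contractionMatrix_rotation
    (T : Fin 3 → Fin 3 → Fin 3 → ℝ)
    (hsym₁ : ∀ i j k, T i j k = T j i k)
    (hsym₂ : ∀ i j k, T i j k = T i k j)
    (R : Matrix (Fin 3) (Fin 3) ℝ) (hR : Rᵀ * R = 1)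
    (RT : Fin 3 → Fin 3 → Fin 3 → ℝ)
    (hRT : ∀ i j k, RT i j k = ∑ a, ∑ b, ∑ c, R i a * R j b * R k c * T a b c) :
    contractionMatrix RT = R * contractionMatrix T := by
  have hδ : ∀ q r : Fin 3, ∑ a, R a q * R a r = if q = r then (1:ℝ) else 0 := by
    intro q r
    have := congrFun (congrFun hR q) r
    simpa [Matrix.mul_apply, Matrix.transpose_apply, Matrix.one_apply] using this
  have key : ∀ (S : Fin 3 → Fin 3 → Fin 3 → ℝ) (i : Fin 3),
      (∑ a, ∑ p, ∑ q, ∑ r, R i p * R a q * R a r * S p q r)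
      = ∑ p, R i p * ∑ q, S p q q := by
    intro S i
    rw [Finset.sum_comm]
    refine Finset.sum_congr rfl fun p _ => ?_
    calc ∑ a, ∑ q, ∑ r, R i p * R a q * R a r * S p q r
        = ∑ q, ∑ r, (∑ a, R a q * R a r) * (R i p * S p q r) := by
          rw [Finset.sum_comm]
          refine Finset.sum_congr rfl fun q _ => ?_
          rw [Finset.sum_comm]
          refine Finset.sum_congr rfl fun r _ => ?_
          rw [Finset.sum_mul]
          exact Finset.sum_congr rfl fun a _ => by ring
      _ = ∑ q, ∑ r, (if q = r then (1:ℝ) else 0) * (R i p * S p q r) := by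
          simp only [hδ]
      _ = R i p * ∑ q, S p q q := by
          simp [Finset.mul_sum]
  ext i j
  fin_cases j
  · show (∑ a, RT i a a) = ∑ b, R i b * ((Matrix.of _ : Matrix (Fin 3) (Fin 3) ℝ) b 0)
    simp only [hRT, contractionMatrix, Matrix.of_apply, Matrix.cons_val_zero]
    exact key T i
  · show (∑ a, RT a i a) = ∑ b, R i b * (∑ c, T c b c)
    simp only [hRT, contractionMatrix, Matrix.of_apply, Matrix.cons_val_one, Matrix.head_cons]
    calc ∑ a, ∑ p, ∑ q, ∑ r, R a p * R i q * R a r * T p q r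
        = ∑ a, ∑ q, ∑ p, ∑ r, R i q * R a p * R a r * T p q r := by
          refine Finset.sum_congr rfl fun a _ => ?_
          rw [Finset.sum_comm]
          exact Finset.sum_congr rfl fun q _ => Finset.sum_congr rfl fun p _ =>
            Finset.sum_congr rfl fun r _ => by ring
      _ = ∑ p, R i p * ∑ q, T q p q := key (fun p q r => T q p r) i
  · show (∑ a, RT a a i) = ∑ b, R i b * (∑ c, T c c b)
    simp only [hRT, contractionMatrix, Matrix.of_apply]
    calc ∑ a, ∑ p, ∑ q, ∑ r, R a p * R a q * R i r * T p q r
        = ∑ a, ∑ r, ∑ p, ∑ q, R i r * R a p * R a q * T p q r := by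
          refine Finset.sum_congr rfl fun a _ => ?_
          rw [show (∑ p, ∑ q, ∑ r, R a p * R a q * R i r * T p q r)
              = ∑ p, ∑ r, ∑ q, R a p * R a q * R i r * T p q r from
            Finset.sum_congr rfl fun p _ => Finset.sum_comm]
          rw [Finset.sum_comm]
          exact Finset.sum_congr rfl fun r _ => Finset.sum_congr rfl fun p _ =>
            Finset.sum_congr rfl fun q _ => by ring
      _ = ∑ p, R i p * ∑ q, T q q p := key (fun p q r => T q r p) i
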